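/- arXiv:2307.05149 — 4 statements merged into one kernel-verified Lean document; each statement's English description precedes it below -/
import Mathlib

section
/- Let I be a finite (or summable) index set in ℕ², and for each multi-index α let E_α = exp(-ρ·α) be its error contribution and ϖ_α = exp(ḡ·α) + exp(ḡ̄·α) its work contribution, for fixed vectors ρ, ḡ, ḡ̄ ∈ ℝ². Define the level set I(v) = {α ∈ ℕ² : E_α/ϖ_α ≥ v}. Then I(v) is optimal in the following sense: for any other index set Ī ⊆ ℕ² with the same total error, i.e. ∑_{α∉I(v)} E_α = ∑_{α∉Ī} E_α (both sums assumed convergent), the total work satisfies ∑_{α∈I(v)} ϖ_α ≤ ∑_{α∈Ī} ϖ_α. -/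
open Real

/-- Dot product of a vector in ℝ² with a multi-index in ℕ². -/
noncomputable def dot2 (v : ℝ × ℝ) (α : ℕ × ℕ) : ℝ := v.1 * α.1 + v.2 * α.2

/-!
For `v > 0` this is the exchange argument of the knapsack problem: with `h = v • ϖ - E`, the
level set is exactly `{h ≤ 0}`, so it minimises `∑_{α ∈ I} h α = v W(I) - ∑_{α ∈ I} E α` over
all index sets `I`; equal tail errors mean equal errors inside, hence `W(I(v)) ≤ W(Ī)`.
For `v ≤ 0` the level set is all of `ℕ²`, and a positive error forces `Ī = ℕ²` as well.
-/

open Set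

section LevelSet

variable {ι : Type*}

theorem tsum_subtype_setOf_nonpos_le {h : ι → ℝ} {t : Set ι}
    (hs : Summable fun i : {i | h i ≤ 0} => h i) (ht : Summable fun i : t => h i) :
    ∑' i : {i | h i ≤ 0}, h i ≤ ∑' i : t, h i := by
  rw [tsum_subtype, tsum_subtype]
  refine Summable.tsum_le_tsum (fun i => ?_) (summable_subtype_iff_indicator.mp hs)
    (summable_subtype_iff_indicator.mp ht)
  by_cases hi : h i ≤ 0 <;> by_cases hit : i ∈ t <;>
    simp [indicator, hi, hit, le_of_not_ge]

theorem tsum_subtype_eq_of_tsum_compl_eq {f : ι → ℝ} (hf : Summable f) {s t : Set ι}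
    (h : ∑' i : (sᶜ : Set ι), f i = ∑' i : (tᶜ : Set ι), f i) :
    ∑' i : s, f i = ∑' i : t, f i := by
  have hs := hf.subtype s |>.tsum_add_tsum_compl (hf.subtype sᶜ)
  have ht := hf.subtype t |>.tsum_add_tsum_compl (hf.subtype tᶜ)
  linarith

theorem eq_univ_of_tsum_compl_eq_zero {f : ι → ℝ} (hf : Summable f) (hpos : ∀ i, 0 < f i)
    {t : Set ι} (h : ∑' i : (tᶜ : Set ι), f i = 0) : t = univ := by
  by_contra hne
  obtain ⟨i, hi⟩ : (tᶜ).Nonempty := nonempty_compl.mpr hne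
  have : 0 < ∑' j : (tᶜ : Set ι), f j :=
    (hf.subtype tᶜ).tsum_pos (fun j => (hpos j).le) ⟨i, hi⟩ (hpos i)
  linarith

theorem tsum_levelSet_le_of_tsum_compl_eq {E ϖ : ι → ℝ} {v : ℝ} (hv : 0 < v)
    (hϖ : ∀ i, 0 < ϖ i) (hE : Summable E) {s t : Set ι} (hs : s = {i | v ≤ E i / ϖ i})
    (hWs : Summable fun i : s => ϖ i) (hWt : Summable fun i : t => ϖ i)
    (heq : ∑' i : (sᶜ : Set ι), E i = ∑' i : (tᶜ : Set ι), E i) :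
    ∑' i : s, ϖ i ≤ ∑' i : t, ϖ i := by
  have hsublevel : s = {i | v * ϖ i - E i ≤ 0} := by
    rw [hs]
    ext i
    exact (le_div_iff₀ (hϖ i)).trans sub_nonpos.symm
  subst hsublevel
  have hEs (u : Set ι) : Summable fun i : u => E i := hE.subtype u
  have hlag := tsum_subtype_setOf_nonpos_le ((hWs.mul_left v).sub (hEs _))
    ((hWt.mul_left v).sub (hEs t))
  rw [(hWs.mul_left v).tsum_sub (hEs _), (hWt.mul_left v).tsum_sub (hEs t),
    tsum_mul_left, tsum_mul_left, tsum_subtype_eq_of_tsum_compl_eq hE heq] at hlag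
  exact le_of_mul_le_mul_left (by linarith) hv

end LevelSet

/-- Optimality of the profit level set: among all index sets with the same total
(tail) error, the level set `I(v) = {α : E α / ϖ α ≥ v}` has minimal total work. -/
theorem stmt0 (ρ g gg : ℝ × ℝ) (v : ℝ)
    (E ϖ : ℕ × ℕ → ℝ)
    (hE : ∀ α, E α = Real.exp (-(dot2 ρ α)))
    (hϖ : ∀ α, ϖ α = Real.exp (dot2 g α) + Real.exp (dot2 gg α))
    (Iv : Set (ℕ × ℕ)) (hIv : Iv = {α | v ≤ E α / ϖ α})
    (Ibar : Set (ℕ × ℕ))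
    (hEsum : Summable E)
    (hWIv : Summable (fun α : Iv => ϖ α))
    (hWIbar : Summable (fun α : Ibar => ϖ α))
    (heq : ∑' α : (Ivᶜ : Set (ℕ × ℕ)), E α = ∑' α : (Ibarᶜ : Set (ℕ × ℕ)), E α) :
    ∑' α : Iv, ϖ α ≤ ∑' α : Ibar, ϖ α := by
  have hEpos : ∀ α, 0 < E α := fun α => hE α ▸ exp_pos _
  have hϖpos : ∀ α, 0 < ϖ α := fun α => hϖ α ▸ by positivity
  rcases lt_or_ge 0 v with hv | hv
  · exact tsum_levelSet_le_of_tsum_compl_eq hv hϖpos hEsum hIv hWIv hWIbar heq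
  · have hIv_univ : Iv = univ :=
      hIv ▸ eq_univ_of_forall fun α => hv.trans (div_pos (hEpos α) (hϖpos α)).le
    have hIbar_univ : Ibar = univ := by
      refine eq_univ_of_tsum_compl_eq_zero hEsum hEpos ?_
      rw [← heq, hIv_univ, compl_univ, tsum_empty]
    rw [hIv_univ, hIbar_univ]
end

section
/- Under the constrained optimization of the previous context, the minimal total cost subject to ∑_{α∈I}(V₁_α/M₁_α + V₂_α/(M₁_α M₂_α)) ≤ ε² satisfies min W ≤ ε^{-2} ( ∑_{α∈I} ( √(V₁_α C₁_α) + √(V₂_α C₂_α) ) )², where C₁_α = N_α^{γ₂} P_α^{1+γ₁} and C₂_α = N_α^{γ₂} P_α^{γ₁} are the per-sample costs of the outer and inner loops. -/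
/-! Take `M₁ = t √(V₁/C₁)` and `M₂ = √(V₂C₁/(C₂V₁))`, so that `M₁M₂ = t √(V₂/C₂)`. Then each
index contributes `(√(V₁C₁) + √(V₂C₂)) / t` to the variance and `t (√(V₁C₁) + √(V₂C₂))` to the
cost. With `S = ∑ (√(V₁C₁) + √(V₂C₂))` and `t = S / ε²` the variance is exactly `ε²` and the cost
exactly `S² / ε²`. -/

open Finset

noncomputable def outerSampleSize (t V₁ C₁ : ℝ) : ℝ := t * √(V₁ / C₁)

noncomputable def innerSampleSize (V₁ V₂ C₁ C₂ : ℝ) : ℝ := √(V₂ * C₁ / (C₂ * V₁))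

lemma div_mul_sqrt_div_eq {t V C : ℝ} (hV : 0 ≤ V) (hC : 0 ≤ C) :
    V / (t * √(V / C)) = √(V * C) / t := by
  rw [Real.sqrt_div' _ hC, Real.sqrt_mul hV, mul_div_assoc', div_div_eq_mul_div,
    mul_comm t, ← div_div, mul_div_right_comm, Real.div_sqrt]

lemma mul_sqrt_div_mul_eq (t V : ℝ) {C : ℝ} (hC : 0 ≤ C) :
    t * √(V / C) * C = t * √(V * C) := by
  have hVC : V / C * (C * C) = V * C := by
    rcases eq_or_ne C 0 with rfl | hC0
    · simp
    · field_simp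
  calc t * √(V / C) * C = t * (√(V / C) * √(C * C)) := by rw [Real.sqrt_mul_self hC, mul_assoc]
    _ = t * √(V * C) := by rw [← Real.sqrt_mul' _ (mul_self_nonneg C), hVC]

section SampleSizes

variable {V₁ V₂ C₁ C₂ : ℝ}

lemma outerSampleSize_mul_innerSampleSize (t : ℝ) (hV₁ : 0 < V₁) (hC₁ : 0 < C₁) :
    outerSampleSize t V₁ C₁ * innerSampleSize V₁ V₂ C₁ C₂ = t * √(V₂ / C₂) := by
  rw [outerSampleSize, innerSampleSize, mul_assoc, ← Real.sqrt_mul (by positivity)]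
  congr 2
  field_simp

lemma variance_outerSampleSize_innerSampleSize (t : ℝ) (hV₁ : 0 < V₁) (hV₂ : 0 ≤ V₂)
    (hC₁ : 0 < C₁) (hC₂ : 0 ≤ C₂) :
    V₁ / outerSampleSize t V₁ C₁ +
        V₂ / (outerSampleSize t V₁ C₁ * innerSampleSize V₁ V₂ C₁ C₂) =
      (√(V₁ * C₁) + √(V₂ * C₂)) / t := by
  rw [outerSampleSize_mul_innerSampleSize t hV₁ hC₁, outerSampleSize,
    div_mul_sqrt_div_eq hV₁.le hC₁.le, div_mul_sqrt_div_eq hV₂ hC₂, add_div]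

lemma cost_outerSampleSize_innerSampleSize (t : ℝ) (hV₁ : 0 < V₁) (hC₁ : 0 < C₁)
    (hC₂ : 0 ≤ C₂) :
    outerSampleSize t V₁ C₁ * C₁ +
        outerSampleSize t V₁ C₁ * innerSampleSize V₁ V₂ C₁ C₂ * C₂ =
      t * (√(V₁ * C₁) + √(V₂ * C₂)) := by
  rw [outerSampleSize_mul_innerSampleSize t hV₁ hC₁, outerSampleSize,
    mul_sqrt_div_mul_eq t V₁ hC₁.le, mul_sqrt_div_mul_eq t V₂ hC₂, mul_add]

end SampleSizes

theorem exists_sampleSizes_variance_le_cost_le {ι : Type*} (I : Finset ι)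
    (V₁ V₂ C₁ C₂ : ι → ℝ) {ε : ℝ} (hε : 0 < ε)
    (hV₁ : ∀ α ∈ I, 0 < V₁ α) (hV₂ : ∀ α ∈ I, 0 < V₂ α)
    (hC₁ : ∀ α ∈ I, 0 < C₁ α) (hC₂ : ∀ α ∈ I, 0 < C₂ α) :
    ∃ M₁ M₂ : ι → ℝ, (∀ α ∈ I, 0 < M₁ α) ∧ (∀ α ∈ I, 0 < M₂ α) ∧
      (∑ α ∈ I, (V₁ α / M₁ α + V₂ α / (M₁ α * M₂ α)) ≤ ε ^ 2) ∧
      (∑ α ∈ I, (M₁ α * C₁ α + M₁ α * M₂ α * C₂ α) ≤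
        ε⁻¹ ^ 2 * (∑ α ∈ I, (√(V₁ α * C₁ α) + √(V₂ α * C₂ α))) ^ 2) := by
  rcases I.eq_empty_or_nonempty with rfl | hI
  · exact ⟨1, 1, by simp, by simp, by simp; positivity, by simp⟩
  set S := ∑ α ∈ I, (√(V₁ α * C₁ α) + √(V₂ α * C₂ α))
  have hS : 0 < S := sum_pos (fun α hα => add_pos_of_pos_of_nonneg
    (Real.sqrt_pos.2 (mul_pos (hV₁ α hα) (hC₁ α hα))) (Real.sqrt_nonneg _)) hI
  set t := S / ε ^ 2
  refine ⟨fun α => outerSampleSize t (V₁ α) (C₁ α),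
    fun α => innerSampleSize (V₁ α) (V₂ α) (C₁ α) (C₂ α), fun α hα => ?_, fun α hα => ?_, ?_, ?_⟩
  · exact mul_pos (by positivity) (Real.sqrt_pos.2 (div_pos (hV₁ α hα) (hC₁ α hα)))
  · exact Real.sqrt_pos.2 (div_pos (mul_pos (hV₂ α hα) (hC₁ α hα))
      (mul_pos (hC₂ α hα) (hV₁ α hα)))
  · rw [sum_congr rfl fun α hα => variance_outerSampleSize_innerSampleSize t (hV₁ α hα)
      (hV₂ α hα).le (hC₁ α hα) (hC₂ α hα).le, ← sum_div]
    exact (div_div_cancel₀ hS.ne').le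
  · rw [sum_congr rfl fun α hα => cost_outerSampleSize_innerSampleSize t (hV₁ α hα)
      (hC₁ α hα) (hC₂ α hα).le, ← mul_sum]
    exact le_of_eq (by ring)

theorem stmt4_general {ι : Type*} (I : Finset ι)
    (P N V₁ V₂ C₁ C₂ : ι → ℝ) (γ₁ γ₂ ε : ℝ)
    (hP : ∀ α ∈ I, 0 < P α) (hN : ∀ α ∈ I, 0 < N α)
    (hV₁ : ∀ α ∈ I, 0 < V₁ α) (hV₂ : ∀ α ∈ I, 0 < V₂ α)
    (hε : 0 < ε)
    (hC₁ : ∀ α ∈ I, C₁ α = N α ^ γ₂ * P α ^ (1 + γ₁))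
    (hC₂ : ∀ α ∈ I, C₂ α = N α ^ γ₂ * P α ^ γ₁) :
    ∃ M₁ M₂ : ι → ℝ, (∀ α ∈ I, 0 < M₁ α) ∧ (∀ α ∈ I, 0 < M₂ α) ∧
      (∑ α ∈ I, (V₁ α / M₁ α + V₂ α / (M₁ α * M₂ α)) ≤ ε ^ 2) ∧
      (∑ α ∈ I, (M₁ α * C₁ α + M₁ α * M₂ α * C₂ α) ≤
        ε⁻¹ ^ 2 * (∑ α ∈ I, (Real.sqrt (V₁ α * C₁ α) + Real.sqrt (V₂ α * C₂ α))) ^ 2) := by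
  have hC₁_pos : ∀ α ∈ I, 0 < C₁ α := fun α hα => by
    have := hN α hα; have := hP α hα
    rw [hC₁ α hα]; positivity
  have hC₂_pos : ∀ α ∈ I, 0 < C₂ α := fun α hα => by
    have := hN α hα; have := hP α hα
    rw [hC₂ α hα]; positivity
  exact exists_sampleSizes_variance_le_cost_le I V₁ V₂ C₁ C₂ hε hV₁ hV₂ hC₁_pos hC₂_pos

/-- The minimal total cost of the double loop Monte Carlo estimator subject to
the variance constraint `∑ (V₁_α/M₁_α + V₂_α/(M₁_α M₂_α)) ≤ ε²` is at most
`ε⁻² (∑ (√(V₁_α C₁_α) + √(V₂_α C₂_α)))²`, where `C₁_α = N_α^γ₂ P_α^{1+γ₁}` and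
`C₂_α = N_α^γ₂ P_α^γ₁`. -/
theorem stmt4 {ι : Type*} (I : Finset ι)
    (P N V₁ V₂ C₁ C₂ : ι → ℝ) (γ₁ γ₂ ε : ℝ)
    (hP : ∀ α ∈ I, 0 < P α) (hN : ∀ α ∈ I, 0 < N α)
    (hV₁ : ∀ α ∈ I, 0 < V₁ α) (hV₂ : ∀ α ∈ I, 0 < V₂ α)
    (hγ₁ : 0 < γ₁) (hγ₂ : 0 < γ₂) (hε : 0 < ε)
    (hC₁ : ∀ α ∈ I, C₁ α = N α ^ γ₂ * P α ^ (1 + γ₁))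
    (hC₂ : ∀ α ∈ I, C₂ α = N α ^ γ₂ * P α ^ γ₁) :
    ∃ M₁ M₂ : ι → ℝ, (∀ α ∈ I, 0 < M₁ α) ∧ (∀ α ∈ I, 0 < M₂ α) ∧
      (∑ α ∈ I, (V₁ α / M₁ α + V₂ α / (M₁ α * M₂ α)) ≤ ε ^ 2) ∧
      (∑ α ∈ I, (M₁ α * C₁ α + M₁ α * M₂ α * C₂ α) ≤
        ε⁻¹ ^ 2 * (∑ α ∈ I, (Real.sqrt (V₁ α * C₁ α) + Real.sqrt (V₂ α * C₂ α))) ^ 2) :=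
  stmt4_general I P N V₁ V₂ C₁ C₂ γ₁ γ₂ ε hP hN hV₁ hV₂ hε hC₁ hC₂
end

section
/- Let M̂₁_α = ⌈M₁_α⌉ and M̂₂_α = ⌈M̃_α/⌈M₁_α⌉⌉ where M̃_α = M₁_α M₂_α, for positive reals M₁_α, M₂_α. Then the cost with rounded sample sizes satisfies ∑_α (M̂₁_α C₁_α + M̂₁_α M̂₂_α C₂_α) ≤ 2 W₁ + W₂ + W₃ + W₄, where W₁ = ∑_α (M₁_α C₁_α + M̃_α C₂_α), W₂ = ∑_α (C₁_α + C₂_α), W₃ = ∑_α M₁_α C₂_α, W₄ = ∑_α (M̃_α/⌈M₁_α⌉) C₂_α; moreover if C₂_α ≤ C₁_α for all α then W₃ ≤ W₁ and W₄ ≤ W₁, hence the total rounded cost is at most 4 W₁ + W₂. -/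
/-!
Rounding up costs at most one extra sample per level: `⌈M₁⌉ ≤ M₁ + 1`, and
`⌈M₁⌉ · ⌈M̃ / ⌈M₁⌉⌉ ≤ M̃ + ⌈M₁⌉ ≤ M̃ + M₁ + 1`. Summing these per-level bounds gives
`W₁ + W₂ + W₃`, which is below `2W₁ + W₂ + W₃ + W₄` since every `W` is nonnegative.
When `C₂ ≤ C₁`, both `M₁C₂` and `(M̃ / ⌈M₁⌉)C₂ ≤ M̃C₂` are termwise dominated by
`M₁C₁ + M̃C₂`.
-/

open Finset

section Rounding

variable {K : Type*} [Field K] [LinearOrder K] [IsStrictOrderedRing K] [FloorSemiring K]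

theorem natCast_mul_ceil_div_le (n : ℕ) {x : K} (hx : 0 ≤ x) :
    (n : K) * ⌈x / n⌉₊ ≤ x + n := by
  rcases n.eq_zero_or_pos with rfl | hn
  · simpa using hx
  calc (n : K) * ⌈x / n⌉₊ ≤ n * (x / n + 1) := by
        gcongr; exact (Nat.ceil_lt_add_one (by positivity)).le
    _ = x + n := by field_simp

theorem roundedCost_le {a m c₁ c₂ : K} (ha : 0 ≤ a) (hm : 0 ≤ m) (hc₁ : 0 ≤ c₁)
    (hc₂ : 0 ≤ c₂) :
    (⌈a⌉₊ : K) * c₁ + (⌈a⌉₊ : K) * ⌈m / ⌈a⌉₊⌉₊ * c₂ ≤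
      (a * c₁ + m * c₂) + (c₁ + c₂) + a * c₂ := by
  have hceil : (⌈a⌉₊ : K) ≤ a + 1 := (Nat.ceil_lt_add_one ha).le
  have hprod : (⌈a⌉₊ : K) * ⌈m / ⌈a⌉₊⌉₊ ≤ m + a + 1 := by
    linarith [natCast_mul_ceil_div_le ⌈a⌉₊ hm]
  nlinarith [mul_le_mul_of_nonneg_right hceil hc₁, mul_le_mul_of_nonneg_right hprod hc₂]

theorem div_natCeil_le_self {a x : K} (ha : 0 < a) (hx : 0 ≤ x) : x / ⌈a⌉₊ ≤ x :=
  div_le_self hx (by exact_mod_cast Nat.one_le_ceil_iff.mpr ha)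

end Rounding

/-- Rounding the real-valued optimal sample sizes up to integers
(`M̂₁_α = ⌈M₁_α⌉`, `M̂₂_α = ⌈M̃_α/⌈M₁_α⌉⌉` with `M̃_α = M₁_α M₂_α`) increases
the total cost by at most `2W₁ + W₂ + W₃ + W₄`; moreover if `C₂_α ≤ C₁_α` for
all `α`, then `W₃ ≤ W₁` and `W₄ ≤ W₁`, so the rounded cost is at most
`4W₁ + W₂`. -/
theorem stmt5 {ι : Type*} (I : Finset ι)
    (C₁ C₂ M₁ M₂ Mt : ι → ℝ)
    (hC₁ : ∀ α ∈ I, 0 < C₁ α) (hC₂ : ∀ α ∈ I, 0 < C₂ α)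
    (hM₁ : ∀ α ∈ I, 0 < M₁ α) (hM₂ : ∀ α ∈ I, 0 < M₂ α)
    (hMt : ∀ α ∈ I, Mt α = M₁ α * M₂ α)
    (W₁ W₂ W₃ W₄ : ℝ)
    (hW₁ : W₁ = ∑ α ∈ I, (M₁ α * C₁ α + Mt α * C₂ α))
    (hW₂ : W₂ = ∑ α ∈ I, (C₁ α + C₂ α))
    (hW₃ : W₃ = ∑ α ∈ I, M₁ α * C₂ α)
    (hW₄ : W₄ = ∑ α ∈ I, (Mt α / (⌈M₁ α⌉₊ : ℝ)) * C₂ α) :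
    (∑ α ∈ I, ((⌈M₁ α⌉₊ : ℝ) * C₁ α +
        (⌈M₁ α⌉₊ : ℝ) * (⌈Mt α / (⌈M₁ α⌉₊ : ℝ)⌉₊ : ℝ) * C₂ α) ≤
      2 * W₁ + W₂ + W₃ + W₄) ∧
    ((∀ α ∈ I, C₂ α ≤ C₁ α) → W₃ ≤ W₁ ∧ W₄ ≤ W₁ ∧
      ∑ α ∈ I, ((⌈M₁ α⌉₊ : ℝ) * C₁ α +
        (⌈M₁ α⌉₊ : ℝ) * (⌈Mt α / (⌈M₁ α⌉₊ : ℝ)⌉₊ : ℝ) * C₂ α) ≤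
      4 * W₁ + W₂) := by
  have hMt0 : ∀ α ∈ I, 0 ≤ Mt α := fun α hα =>
    hMt α hα ▸ (mul_pos (hM₁ α hα) (hM₂ α hα)).le
  have hW₁0 : 0 ≤ W₁ := hW₁ ▸ sum_nonneg fun α hα => by
    have := hM₁ α hα; have := hC₁ α hα; have := hC₂ α hα; have := hMt0 α hα; positivity
  have hW₄0 : 0 ≤ W₄ := hW₄ ▸ sum_nonneg fun α hα => by
    have := hC₂ α hα; have := hMt0 α hα; positivity
  have hround : ∑ α ∈ I, ((⌈M₁ α⌉₊ : ℝ) * C₁ α +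
      (⌈M₁ α⌉₊ : ℝ) * (⌈Mt α / (⌈M₁ α⌉₊ : ℝ)⌉₊ : ℝ) * C₂ α) ≤ W₁ + W₂ + W₃ := by
    rw [hW₁, hW₂, hW₃, ← sum_add_distrib, ← sum_add_distrib]
    exact sum_le_sum fun α hα => roundedCost_le (hM₁ α hα).le (hMt0 α hα)
      (hC₁ α hα).le (hC₂ α hα).le
  refine ⟨by linarith, fun hC => ?_⟩
  have hW₃le : W₃ ≤ W₁ := hW₃ ▸ hW₁ ▸ sum_le_sum fun α hα => by
    nlinarith [hM₁ α hα, hC α hα, hC₂ α hα, hMt0 α hα]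
  have hW₄le : W₄ ≤ W₁ := hW₄ ▸ hW₁ ▸ sum_le_sum fun α hα => by
    nlinarith [div_natCeil_le_self (hM₁ α hα) (hMt0 α hα), hM₁ α hα, hC₁ α hα, hC₂ α hα]
  exact ⟨hW₃le, hW₄le, by linarith⟩
end

section
/- In the isotropic case γ₁ = γ₂ = γ > 0, w₁ = w₂ = s₁ = s₂ = s > 0, b₁ = b₂ = b > 0, with the condition 2b ≥ s, the multi-index DLMC work bound W(TOL) ≲ TOL^{-2} ( ∑_{α∈I(L(TOL))} τ^{α₁(1+γ-s)/2 + α₂(γ-s)/2} + τ^{α₁(γ-s)/2 + α₂(γ-s)/2} )² satisfies, as TOL → 0: W(TOL) = O(TOL^{-2}) if s > 1+γ; W(TOL) = O(TOL^{-2} (log TOL^{-1})²) if s = 1+γ; and W(TOL) = O(TOL^{-2-(1+γ-s)/b}) if s < 1+γ, where the level L(TOL) is chosen minimally so that the geometric bias bound Q_B ∑_{α∉I(L)} τ^{-b(α₁+α₂)} ≤ TOL holds. -/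
open Real Filter Topology

/-!
Write `w₁ = (1+γ-s)/2` and `w₂ = (γ-s)/2`. The index set `I(L)` lies in the triangle
`δ·α ≤ L`, while its complement lies in `{δ·α > L - log 2} ∪ {(α₁+α₂)/2 > L - log 2}`. Summing
the bias terms `τ^{-b|α|}` column by column over these two regions gives
`bias L ≲ τ^{-bL/δ₁}`, so the minimal level satisfies `τ^{b L(TOL)/δ₁} ≲ TOL⁻¹`.

The inner-sample cost is dominated by the outer one, and `∑_{δ·α ≤ L} τ^{w₁α₁+w₂α₂}` is bounded
by a constant if `w₁ < 0`, is `O(L)` if `w₁ = 0`, and is `O(τ^{w₁L/δ₁})` if `w₁ > 0`: then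
`w₂δ₁ < w₁δ₂` makes the exponent decrease along the face `δ·α = L` away from `α₂ = 0`, and the
sum is dominated by that corner. Inserting the level bound yields the three rates.
-/

namespace MultiIndexDLMC

lemma le_of_exp_add_exp_le {x y L : ℝ} (h : exp x + exp y ≤ exp L) : x ≤ L :=
  exp_le_exp.mp (by linarith [exp_pos y])

lemma lt_or_lt_of_exp_lt_exp_add_exp {x y L : ℝ} (h : exp L < exp x + exp y) :
    L - log 2 < x ∨ L - log 2 < y := by
  by_contra! h'
  have hx := exp_le_exp.mpr h'.1
  have hy := exp_le_exp.mpr h'.2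
  rw [exp_sub, exp_log two_pos] at hx hy
  linarith

section Summation

variable {ι κ : Type*}

lemma tsum_le_tsum_of_injective_of_le {f : ι → ℝ} {g : κ → ℝ} (e : ι → κ)
    (he : Function.Injective e) (hf : ∀ i, 0 ≤ f i) (hg : ∀ k, 0 ≤ g k) (hgs : Summable g)
    (h : ∀ i, f i ≤ g (e i)) : ∑' i, f i ≤ ∑' k, g k :=
  Summable.tsum_le_tsum_of_inj e he (fun k _ => hg k) h
    ((hgs.comp_injective he).of_nonneg_of_le hf h) hgs

lemma tsum_subtype_le_add_of_subset_union {f : ι → ℝ} (hf0 : ∀ i, 0 ≤ f i) (hf : Summable f)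
    {S A B : Set ι} (h : S ⊆ A ∪ B) : ∑' i : S, f i ≤ ∑' i : A, f i + ∑' i : B, f i := by
  rw [tsum_subtype, tsum_subtype, tsum_subtype,
    ← Summable.tsum_add (hf.indicator _) (hf.indicator _)]
  refine Summable.tsum_le_tsum (fun i => ?_) (hf.indicator _)
    ((hf.indicator _).add (hf.indicator _))
  rw [← Set.indicator_union_add_inter_apply]
  have := Set.indicator_nonneg (fun j _ => hf0 j) (s := A ∩ B) i
  linarith [Set.indicator_le_indicator_apply_of_subset h (hf0 i)]

lemma hasSum_mul_of_nonneg {f : ι → ℝ} {g : κ → ℝ} {a b : ℝ} (hf : HasSum f a) (hg : HasSum g b)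
    (hf0 : ∀ i, 0 ≤ f i) (hg0 : ∀ k, 0 ≤ g k) :
    HasSum (fun p : ι × κ => f p.1 * g p.2) (a * b) :=
  hf.mul hg (hf.summable.mul_of_nonneg hg.summable hf0 hg0)

end Summation

section Geometric

variable {τ : ℝ}

lemma one_sub_rpow_pos (hτ : 1 < τ) {r : ℝ} (hr : r < 0) : 0 < 1 - τ ^ r :=
  sub_pos.mpr (rpow_lt_one_of_one_lt_of_neg hτ hr)

lemma hasSum_rpow_mul_natCast (hτ : 1 < τ) {r : ℝ} (hr : r < 0) :
    HasSum (fun n : ℕ => τ ^ (r * n)) (1 - τ ^ r)⁻¹ := by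
  simp_rw [rpow_mul_natCast (by linarith : (0 : ℝ) ≤ τ)]
  exact hasSum_geometric_of_lt_one (by positivity) (rpow_lt_one_of_one_lt_of_neg hτ hr)

lemma hasSum_rpow_mul_add_mul (hτ : 1 < τ) {u v : ℝ} (hu : u < 0) (hv : v < 0) :
    HasSum (fun p : ℕ × ℕ => τ ^ (u * p.1 + v * p.2)) ((1 - τ ^ u)⁻¹ * (1 - τ ^ v)⁻¹) := by
  simpa only [← rpow_add (by linarith : 0 < τ)] using
    hasSum_mul_of_nonneg (hasSum_rpow_mul_natCast hτ hu) (hasSum_rpow_mul_natCast hτ hv)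
      (fun _ => by positivity) (fun _ => by positivity)

end Geometric

section LevelSets

variable {τ δ1 δ2 : ℝ}

lemma finite_setOf_dot_le (hδ1 : 0 < δ1) (hδ2 : 0 < δ2) (L : ℝ) :
    {p : ℕ × ℕ | δ1 * p.1 + δ2 * p.2 ≤ L}.Finite := by
  refine ((Set.finite_Iic ⌊L / δ1⌋₊).prod (Set.finite_Iic ⌊L / δ2⌋₊)).subset fun p hp => ?_
  have h1 : (0 : ℝ) ≤ δ1 * p.1 := by positivity
  have h2 : (0 : ℝ) ≤ δ2 * p.2 := by positivity
  refine ⟨Nat.le_floor ?_, Nat.le_floor ?_⟩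
  · rw [le_div_iff₀ hδ1]; linarith [hp.out]
  · rw [le_div_iff₀ hδ2]; linarith [hp.out]

lemma tsum_rpow_le_of_neg (hτ : 1 < τ) {u v : ℝ} (hu : u < 0) (hv : v < 0) (S : Set (ℕ × ℕ)) :
    ∑' p : S, τ ^ (u * (p : ℕ × ℕ).1 + v * (p : ℕ × ℕ).2) ≤ (1 - τ ^ u)⁻¹ * (1 - τ ^ v)⁻¹ := by
  have hsum := hasSum_rpow_mul_add_mul hτ hu hv
  rw [← hsum.tsum_eq]
  exact tsum_le_tsum_of_injective_of_le Subtype.val Subtype.val_injective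
    (fun _ => by positivity) (fun _ => by positivity) hsum.summable fun _ => le_rfl

lemma tsum_rpow_le_of_nonpos (hτ : 1 < τ) {u v L : ℝ} (hu : u ≤ 0) (hv : v < 0)
    (hδ1 : 0 < δ1) (hδ2 : 0 ≤ δ2) (hL : 0 ≤ L) (S : Set (ℕ × ℕ))
    (hS : ∀ p ∈ S, δ1 * p.1 + δ2 * p.2 ≤ L) :
    ∑' p : S, τ ^ (u * (p : ℕ × ℕ).1 + v * (p : ℕ × ℕ).2) ≤ (L / δ1 + 1) * (1 - τ ^ v)⁻¹ := by
  set m := ⌊L / δ1⌋₊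
  have hcol : ∀ p : S, (p : ℕ × ℕ).1 < m + 1 := fun p => by
    have := hS p p.2
    have : (0 : ℝ) ≤ δ2 * (p : ℕ × ℕ).2 := by positivity
    exact Nat.lt_succ_of_le (Nat.le_floor (by rw [le_div_iff₀ hδ1]; linarith))
  have hsum := hasSum_mul_of_nonneg (hasSum_fintype fun _ : Fin (m + 1) => (1 : ℝ))
    (hasSum_rpow_mul_natCast hτ hv) (fun _ => zero_le_one) (fun _ => by positivity)
  calc ∑' p : S, τ ^ (u * (p : ℕ × ℕ).1 + v * (p : ℕ × ℕ).2)
      ≤ ∑' q : Fin (m + 1) × ℕ, 1 * τ ^ (v * q.2) := by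
        refine tsum_le_tsum_of_injective_of_le (fun p => (⟨(p : ℕ × ℕ).1, hcol p⟩, (p : ℕ × ℕ).2))
          (fun p q h => ?_) (fun _ => by positivity) (fun _ => by positivity) hsum.summable
          fun p => ?_
        · simp only [Prod.mk.injEq, Fin.mk.injEq] at h
          exact Subtype.ext (Prod.ext h.1 h.2)
        · rw [one_mul, rpow_le_rpow_left_iff hτ]
          nlinarith [(Nat.cast_nonneg (p : ℕ × ℕ).1 : (0 : ℝ) ≤ _)]
    _ = (m + 1) * (1 - τ ^ v)⁻¹ := by rw [hsum.tsum_eq]; simp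
    _ ≤ (L / δ1 + 1) * (1 - τ ^ v)⁻¹ := by
        have := one_sub_rpow_pos hτ hv
        gcongr
        exact Nat.floor_le (by positivity)

lemma tsum_rpow_le_of_pos (hτ : 1 < τ) {u v L : ℝ} (hu : 0 < u) (huv : v * δ1 < u * δ2)
    (hδ1 : 0 < δ1) (S : Set (ℕ × ℕ)) (hS : ∀ p ∈ S, δ1 * p.1 + δ2 * p.2 ≤ L) :
    ∑' p : S, τ ^ (u * (p : ℕ × ℕ).1 + v * (p : ℕ × ℕ).2)
      ≤ (1 - τ ^ (-u))⁻¹ * (1 - τ ^ (v - u * δ2 / δ1))⁻¹ * τ ^ (u * (L / δ1)) := by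
  have hr : v - u * δ2 / δ1 < 0 := by
    rw [sub_neg, lt_div_iff₀ hδ1]; linarith
  have hsum := (hasSum_rpow_mul_add_mul hτ (neg_neg_of_pos hu) hr).mul_right (τ ^ (u * (L / δ1)))
  rw [← hsum.tsum_eq]
  set top : ℕ → ℕ := fun j => ⌊(L - δ2 * j) / δ1⌋₊
  have hle : ∀ p : S, (p : ℕ × ℕ).1 ≤ top (p : ℕ × ℕ).2 := fun p =>
    Nat.le_floor (by rw [le_div_iff₀ hδ1]; linarith [hS p p.2])
  -- reflect every column at its top point, where the summand is largest
  refine tsum_le_tsum_of_injective_of_le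
    (fun p => (top (p : ℕ × ℕ).2 - (p : ℕ × ℕ).1, (p : ℕ × ℕ).2)) (fun p q h => ?_)
    (fun _ => by positivity) (fun _ => by positivity) hsum.summable fun p => ?_
  · simp only [Prod.mk.injEq] at h
    obtain ⟨h1, h2⟩ := h
    have hp := hle p
    have hq := hle q
    rw [h2] at hp h1
    exact Subtype.ext (Prod.ext (by omega) h2)
  · obtain ⟨⟨i, j⟩, hp⟩ := p
    have htop : (top j : ℝ) ≤ (L - δ2 * j) / δ1 :=
      Nat.floor_le (div_nonneg (by linarith [hS _ hp, (by positivity : (0 : ℝ) ≤ δ1 * i)]) hδ1.le)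
    have hi : i ≤ top j := hle ⟨_, hp⟩
    rw [← rpow_add (by linarith), rpow_le_rpow_left_iff hτ]
    have hcap := mul_le_mul_of_nonneg_left htop hu.le
    have : u * ((L - δ2 * j) / δ1) = u * (L / δ1) - u * δ2 / δ1 * j := by ring
    push_cast [Nat.cast_sub hi]
    linarith

lemma tsum_rpow_neg_le_of_lt_dot (hτ : 1 < τ) {b M : ℝ} (hb : 0 < b) (hδ1 : 0 < δ1)
    (hδ : δ2 < δ1) (S : Set (ℕ × ℕ)) (hS : ∀ p ∈ S, M < δ1 * p.1 + δ2 * p.2) :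
    ∑' p : S, τ ^ (-(b * ((p : ℕ × ℕ).1 + (p : ℕ × ℕ).2)))
      ≤ (1 - τ ^ (-b))⁻¹ * (1 - τ ^ (b * δ2 / δ1 - b))⁻¹ * τ ^ (-(b * (M / δ1))) := by
  have hr : b * δ2 / δ1 - b < 0 := by
    rw [sub_neg, div_lt_iff₀ hδ1]; nlinarith
  have hsum := (hasSum_rpow_mul_add_mul hτ (neg_neg_of_pos hb) hr).mul_right
    (τ ^ (-(b * (M / δ1))))
  rw [← hsum.tsum_eq]
  set bot : ℕ → ℕ := fun j => ⌈(M - δ2 * j) / δ1⌉₊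
  have hle : ∀ p : S, bot (p : ℕ × ℕ).2 ≤ (p : ℕ × ℕ).1 := fun p =>
    Nat.ceil_le.mpr (by rw [div_le_iff₀ hδ1]; linarith [hS p p.2])
  -- shift every column down to its bottom point, where the summand is largest
  refine tsum_le_tsum_of_injective_of_le
    (fun p => ((p : ℕ × ℕ).1 - bot (p : ℕ × ℕ).2, (p : ℕ × ℕ).2)) (fun p q h => ?_)
    (fun _ => by positivity) (fun _ => by positivity) hsum.summable fun p => ?_
  · simp only [Prod.mk.injEq] at h
    obtain ⟨h1, h2⟩ := h
    have hp := hle p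
    have hq := hle q
    rw [h2] at hp h1
    exact Subtype.ext (Prod.ext (by omega) h2)
  · obtain ⟨⟨i, j⟩, hp⟩ := p
    have hbot : (M - δ2 * j) / δ1 ≤ (bot j : ℝ) := Nat.le_ceil _
    have hi : bot j ≤ i := hle ⟨_, hp⟩
    rw [← rpow_add (by linarith), rpow_le_rpow_left_iff hτ]
    have hcap := mul_le_mul_of_nonneg_left hbot hb.le
    have : b * ((M - δ2 * j) / δ1) = b * (M / δ1) - b * δ2 / δ1 * j := by ring
    push_cast [Nat.cast_sub hi]
    linarith

lemma tsum_rpow_neg_le_of_lt_mul_add (hτ : 1 < τ) {b θ lam M : ℝ} (hlam : 0 ≤ lam)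
    (hlamb : lam * θ < b) (S : Set (ℕ × ℕ)) (hS : ∀ p ∈ S, M < θ * p.1 + θ * p.2) :
    ∑' p : S, τ ^ (-(b * ((p : ℕ × ℕ).1 + (p : ℕ × ℕ).2)))
      ≤ (1 - τ ^ (lam * θ - b))⁻¹ * (1 - τ ^ (lam * θ - b))⁻¹ * τ ^ (-(lam * M)) := by
  have hr : lam * θ - b < 0 := by linarith
  have hsum := (hasSum_rpow_mul_add_mul hτ hr hr).mul_right (τ ^ (-(lam * M)))
  rw [← hsum.tsum_eq]
  refine tsum_le_tsum_of_injective_of_le Subtype.val Subtype.val_injective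
    (fun _ => by positivity) (fun _ => by positivity) hsum.summable fun p => ?_
  rw [← rpow_add (by linarith), rpow_le_rpow_left_iff hτ]
  nlinarith [hS p p.2]

lemma exists_tsum_rpow_neg_le (hτ : 1 < τ) {b : ℝ} (hb : 0 < b) (hδ : δ2 < δ1)
    (hδ1 : 1 / 2 < δ1) :
    ∃ C, ∀ (L : ℝ) (S : Set (ℕ × ℕ)),
      (∀ p ∈ S, exp L < exp (δ1 * p.1 + δ2 * p.2) + exp (1 / 2 * p.1 + 1 / 2 * p.2)) →
      ∑' p : S, τ ^ (-(b * ((p : ℕ × ℕ).1 + (p : ℕ × ℕ).2))) ≤ C * τ ^ (-(b * (L / δ1))) := by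
  have hτ0 : 0 < τ := by linarith
  set CA := (1 - τ ^ (-b))⁻¹ * (1 - τ ^ (b * δ2 / δ1 - b))⁻¹
  set CB := (1 - τ ^ (b / δ1 * (1 / 2) - b))⁻¹ * (1 - τ ^ (b / δ1 * (1 / 2) - b))⁻¹
  refine ⟨(CA + CB) * τ ^ (b * (log 2 / δ1)), fun L S hS => ?_⟩
  have hf : Summable fun p : ℕ × ℕ => τ ^ (-(b * (p.1 + p.2))) := by
    convert (hasSum_rpow_mul_add_mul hτ (neg_neg_of_pos hb) (neg_neg_of_pos hb)).summable
      using 3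
    ring
  have hshift :
      τ ^ (-(b * ((L - log 2) / δ1))) = τ ^ (b * (log 2 / δ1)) * τ ^ (-(b * (L / δ1))) := by
    rw [← rpow_add hτ0]; ring_nf
  calc ∑' p : S, τ ^ (-(b * ((p : ℕ × ℕ).1 + (p : ℕ × ℕ).2)))
      ≤ ∑' p : {p : ℕ × ℕ | L - log 2 < δ1 * p.1 + δ2 * p.2},
          τ ^ (-(b * ((p : ℕ × ℕ).1 + (p : ℕ × ℕ).2))) +
        ∑' p : {p : ℕ × ℕ | L - log 2 < 1 / 2 * p.1 + 1 / 2 * p.2},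
          τ ^ (-(b * ((p : ℕ × ℕ).1 + (p : ℕ × ℕ).2))) :=
        tsum_subtype_le_add_of_subset_union (fun _ => by positivity) hf
          fun p hp => lt_or_lt_of_exp_lt_exp_add_exp (hS p hp)
    _ ≤ CA * τ ^ (-(b * ((L - log 2) / δ1))) + CB * τ ^ (-(b / δ1 * (L - log 2))) :=
        add_le_add (tsum_rpow_neg_le_of_lt_dot hτ hb (by linarith) hδ _ fun _ hp => hp)
          (tsum_rpow_neg_le_of_lt_mul_add hτ (by positivity)
            (by rw [div_mul_eq_mul_div, div_lt_iff₀ (by linarith)]; nlinarith) _ fun _ hp => hp)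
    _ = (CA + CB) * τ ^ (b * (log 2 / δ1)) * τ ^ (-(b * (L / δ1))) := by
        rw [show b / δ1 * (L - log 2) = b * ((L - log 2) / δ1) by ring, hshift]; ring

lemma exists_rpow_level_le (hτ : 1 < τ) {b QB : ℝ} (hb : 0 < b) (hδ : δ2 < δ1)
    (hδ1 : 1 / 2 < δ1) (hQB : 0 < QB) {I : ℝ → Set (ℕ × ℕ)}
    (hI : ∀ L, ∀ p ∉ I L, exp L < exp (δ1 * p.1 + δ2 * p.2) + exp (1 / 2 * p.1 + 1 / 2 * p.2))
    {bias : ℝ → ℝ} (hbias : ∀ L, bias L = QB *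
      ∑' p : ((I L)ᶜ : Set (ℕ × ℕ)), τ ^ (-(b * ((p : ℕ × ℕ).1 + (p : ℕ × ℕ).2))))
    {ℓ : ℝ → ℝ} (hℓ : ∀ TOL > 0, ∀ L, bias L ≤ TOL → ℓ TOL ≤ L) :
    ∃ K > 0, ∀ TOL > 0, τ ^ (b * (ℓ TOL / δ1)) ≤ K / TOL := by
  have hτ0 : 0 < τ := by linarith
  obtain ⟨C, hC⟩ := exists_tsum_rpow_neg_le hτ hb hδ hδ1
  have hbiasC : ∀ L, bias L ≤ QB * C * τ ^ (-(b * (L / δ1))) := fun L => by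
    rw [hbias, mul_assoc]
    exact mul_le_mul_of_nonneg_left (hC L _ (hI L)) hQB.le
  -- by minimality of `ℓ TOL`, the level `ℓ TOL - 1` violates the tolerance
  have hlt : ∀ TOL > 0, TOL < QB * C * τ ^ (-(b * ((ℓ TOL - 1) / δ1))) := fun TOL hT => by
    by_contra! h
    linarith [hℓ TOL hT _ ((hbiasC _).trans h)]
  have hQC : 0 < QB * C := by
    by_contra! h
    nlinarith [hlt 1 one_pos, rpow_pos_of_pos hτ0 (-(b * ((ℓ 1 - 1) / δ1)))]
  refine ⟨QB * C * τ ^ (b / δ1), by positivity, fun TOL hT => ?_⟩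
  have hsplit : τ ^ (-(b * ((ℓ TOL - 1) / δ1))) * τ ^ (b * (ℓ TOL / δ1)) = τ ^ (b / δ1) := by
    rw [← rpow_add hτ0]; ring_nf
  rw [le_div_iff₀ hT, ← hsplit, ← mul_assoc, mul_comm]
  exact (mul_lt_mul_of_pos_right (hlt TOL hT) (by positivity)).le

end LevelSets

lemma sq_tsum_work_le {τ : ℝ} (hτ : 1 ≤ τ) (γ s : ℝ) (S : Set (ℕ × ℕ)) [Finite S] :
    (∑' α : S,
      (τ ^ (((α : ℕ × ℕ).1 : ℝ) * (1 + γ - s) / 2 + ((α : ℕ × ℕ).2 : ℝ) * (γ - s) / 2) +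
        τ ^ (((α : ℕ × ℕ).1 : ℝ) * (γ - s) / 2 + ((α : ℕ × ℕ).2 : ℝ) * (γ - s) / 2))) ^ 2
      ≤ 4 * (∑' α : S,
        τ ^ ((1 + γ - s) / 2 * (α : ℕ × ℕ).1 + (γ - s) / 2 * (α : ℕ × ℕ).2)) ^ 2 := by
  rw [show (4 : ℝ) = 2 ^ 2 by norm_num, ← mul_pow, ← tsum_mul_left]
  gcongr ?_ ^ 2
  refine Summable.tsum_le_tsum (fun α => ?_) Summable.of_finite Summable.of_finite
  have hα : (0 : ℝ) ≤ (α : ℕ × ℕ).1 := Nat.cast_nonneg _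
  have hinner := rpow_le_rpow_of_exponent_le hτ
    (show ((α : ℕ × ℕ).1 : ℝ) * (γ - s) / 2 + ((α : ℕ × ℕ).2 : ℝ) * (γ - s) / 2
      ≤ (1 + γ - s) / 2 * (α : ℕ × ℕ).1 + (γ - s) / 2 * (α : ℕ × ℕ).2 by linarith)
  rw [show ((α : ℕ × ℕ).1 : ℝ) * (1 + γ - s) / 2 + ((α : ℕ × ℕ).2 : ℝ) * (γ - s) / 2
    = (1 + γ - s) / 2 * (α : ℕ × ℕ).1 + (γ - s) / 2 * (α : ℕ × ℕ).2 by ring]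
  linarith

lemma isotropic_delta_bounds {w1 w2 b δ1 δ2 : ℝ} (hw : w2 < w1) (hb : 0 < b) (hwb : 0 < w2 + b)
    (hδ1 : δ1 = (w1 + b) / ((w1 + b) + (w2 + b)))
    (hδ2 : δ2 = (w2 + b) / ((w1 + b) + (w2 + b))) :
    0 < δ2 ∧ δ2 < δ1 ∧ 1 / 2 < δ1 ∧ w2 * δ1 < w1 * δ2 := by
  have hD : 0 < (w1 + b) + (w2 + b) := by linarith
  subst hδ1 hδ2
  refine ⟨by positivity, by gcongr, by rw [lt_div_iff₀ hD]; linarith, ?_⟩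
  rw [← mul_div_assoc, ← mul_div_assoc, div_lt_div_iff_of_pos_right hD]
  nlinarith

section Rates

variable {τ b δ1 δ2 K w1 w2 : ℝ} {I : ℝ → Set (ℕ × ℕ)} {ℓ W : ℝ → ℝ}

lemma eventually_work_le_of_neg (hτ : 1 < τ) (hw1 : w1 < 0) (hw2 : w2 < 0)
    (hW : ∀ TOL > 0, W TOL ≤ 4 * TOL ^ (-2 : ℝ) *
      (∑' α : I (ℓ TOL), τ ^ (w1 * (α : ℕ × ℕ).1 + w2 * (α : ℕ × ℕ).2)) ^ 2) :
    ∃ C > 0, ∀ᶠ TOL in 𝓝[>] (0 : ℝ), W TOL ≤ C * TOL ^ (-2 : ℝ) := by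
  have := one_sub_rpow_pos hτ hw1
  have := one_sub_rpow_pos hτ hw2
  refine ⟨4 * ((1 - τ ^ w1)⁻¹ * (1 - τ ^ w2)⁻¹) ^ 2, by positivity, ?_⟩
  filter_upwards [self_mem_nhdsWithin] with TOL (hT : 0 < TOL)
  calc W TOL ≤ 4 * TOL ^ (-2 : ℝ) *
        (∑' α : I (ℓ TOL), τ ^ (w1 * (α : ℕ × ℕ).1 + w2 * (α : ℕ × ℕ).2)) ^ 2 := hW TOL hT
    _ ≤ 4 * TOL ^ (-2 : ℝ) * ((1 - τ ^ w1)⁻¹ * (1 - τ ^ w2)⁻¹) ^ 2 := by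
        gcongr
        exact tsum_rpow_le_of_neg hτ hw1 hw2 _
    _ = _ := by ring

lemma eventually_work_le_log (hτ : 1 < τ) (hw1 : w1 ≤ 0) (hw2 : w2 < 0) (hb : 0 < b) (hδ1 : 0 < δ1)
    (hδ2 : 0 ≤ δ2) (hK : 0 < K) (hI : ∀ L, ∀ p ∈ I L, δ1 * p.1 + δ2 * p.2 ≤ L)
    (hℓ : ∀ TOL > 0, τ ^ (b * (ℓ TOL / δ1)) ≤ K / TOL)
    (hW : ∀ TOL > 0, W TOL ≤ 4 * TOL ^ (-2 : ℝ) *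
      (∑' α : I (ℓ TOL), τ ^ (w1 * (α : ℕ × ℕ).1 + w2 * (α : ℕ × ℕ).2)) ^ 2) :
    ∃ C > 0, ∀ᶠ TOL in 𝓝[>] (0 : ℝ), W TOL ≤ C * TOL ^ (-2 : ℝ) * (log TOL⁻¹) ^ 2 := by
  have hB : 0 < b * log τ := mul_pos hb (log_pos hτ)
  have := one_sub_rpow_pos hτ hw2
  set c := (|log K| + 1) / (b * log τ) + 1
  refine ⟨4 * (c * (1 - τ ^ w2)⁻¹) ^ 2, by positivity, ?_⟩
  filter_upwards [Ioo_mem_nhdsGT (exp_pos (-1))] with TOL ⟨hT, hTe⟩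
  set X := log TOL⁻¹ with hXdef
  have hX : 1 ≤ X := by
    have := log_lt_log hT hTe
    rw [log_exp] at this
    rw [hXdef, log_inv]; linarith
  have hlev : ℓ TOL / δ1 ≤ (log K + X) / (b * log τ) := by
    have := log_le_log (by positivity) (hℓ TOL hT)
    rw [log_rpow (by linarith), log_div hK.ne' hT.ne'] at this
    rw [le_div_iff₀ hB, hXdef, log_inv]; linarith
  have hlin : max (ℓ TOL) 0 / δ1 + 1 ≤ c * X := by
    have h0 : 0 ≤ (|log K| + X) / (b * log τ) := by positivity
    have h1 : max (ℓ TOL) 0 / δ1 ≤ (|log K| + X) / (b * log τ) := by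
      rcases le_total (ℓ TOL) 0 with h | h
      · rwa [max_eq_right h, zero_div]
      · rw [max_eq_left h]
        exact hlev.trans (by gcongr; exact le_abs_self _)
    have h2 : (|log K| + X) / (b * log τ) ≤ (|log K| + 1) / (b * log τ) * X := by
      rw [div_mul_eq_mul_div]
      gcongr
      nlinarith [abs_nonneg (log K)]
    linarith
  have hsum := tsum_rpow_le_of_nonpos hτ hw1 hw2 hδ1 hδ2 (le_max_right (ℓ TOL) 0) _
    fun p hp => (hI _ p hp).trans (le_max_left _ _)
  calc W TOL ≤ 4 * TOL ^ (-2 : ℝ) *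
        (∑' α : I (ℓ TOL), τ ^ (w1 * (α : ℕ × ℕ).1 + w2 * (α : ℕ × ℕ).2)) ^ 2 := hW TOL hT
    _ ≤ 4 * TOL ^ (-2 : ℝ) * (c * X * (1 - τ ^ w2)⁻¹) ^ 2 := by
        gcongr
        exact hsum.trans (by gcongr)
    _ = _ := by ring

lemma eventually_work_le_rpow (hτ : 1 < τ) (hw1 : 0 < w1) (hwδ : w2 * δ1 < w1 * δ2) (hb : 0 < b)
    (hδ1 : 0 < δ1) (hK : 0 < K) (hI : ∀ L, ∀ p ∈ I L, δ1 * p.1 + δ2 * p.2 ≤ L)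
    (hℓ : ∀ TOL > 0, τ ^ (b * (ℓ TOL / δ1)) ≤ K / TOL)
    (hW : ∀ TOL > 0, W TOL ≤ 4 * TOL ^ (-2 : ℝ) *
      (∑' α : I (ℓ TOL), τ ^ (w1 * (α : ℕ × ℕ).1 + w2 * (α : ℕ × ℕ).2)) ^ 2) :
    ∃ C > 0, ∀ᶠ TOL in 𝓝[>] (0 : ℝ), W TOL ≤ C * TOL ^ (-(2 + 2 * w1 / b)) := by
  have hτ0 : 0 < τ := by linarith
  have hr : w2 - w1 * δ2 / δ1 < 0 := by rw [sub_neg, lt_div_iff₀ hδ1]; linarith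
  have := one_sub_rpow_pos hτ (neg_neg_of_pos hw1)
  have := one_sub_rpow_pos hτ hr
  set G := (1 - τ ^ (-w1))⁻¹ * (1 - τ ^ (w2 - w1 * δ2 / δ1))⁻¹
  set e := 2 * w1 / b with he
  refine ⟨4 * G ^ 2 * K ^ e, by positivity, ?_⟩
  filter_upwards [self_mem_nhdsWithin] with TOL (hT : 0 < TOL)
  have hlev : (τ ^ (w1 * (ℓ TOL / δ1))) ^ 2 ≤ K ^ e * TOL ^ (-e) := by
    have h1 : (τ ^ (w1 * (ℓ TOL / δ1))) ^ 2 = (τ ^ (b * (ℓ TOL / δ1))) ^ e := by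
      rw [← rpow_natCast, ← rpow_mul hτ0.le, ← rpow_mul hτ0.le]
      congr 1
      rw [he]
      field_simp
      push_cast
      ring
    rw [h1, rpow_neg hT.le, ← div_eq_mul_inv, ← div_rpow hK.le hT.le]
    exact rpow_le_rpow (by positivity) (hℓ TOL hT) (by positivity)
  calc W TOL ≤ 4 * TOL ^ (-2 : ℝ) *
        (∑' α : I (ℓ TOL), τ ^ (w1 * (α : ℕ × ℕ).1 + w2 * (α : ℕ × ℕ).2)) ^ 2 := hW TOL hT
    _ ≤ 4 * TOL ^ (-2 : ℝ) * (G * τ ^ (w1 * (ℓ TOL / δ1))) ^ 2 := by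
        gcongr
        exact tsum_rpow_le_of_pos hτ hw1 hwδ hδ1 _ (hI _)
    _ = 4 * G ^ 2 * TOL ^ (-2 : ℝ) * (τ ^ (w1 * (ℓ TOL / δ1))) ^ 2 := by ring
    _ ≤ 4 * G ^ 2 * TOL ^ (-2 : ℝ) * (K ^ e * TOL ^ (-e)) := by gcongr
    _ = 4 * G ^ 2 * K ^ e * TOL ^ (-(2 + e)) := by
        rw [neg_add, rpow_add hT]; ring

end Rates

end MultiIndexDLMC

open MultiIndexDLMC in
theorem stmt12_general (τ γ s b QB : ℝ)
    (hτ : 1 < τ) (hγ : 0 < γ) (hb : 0 < b)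
    (hbs : s ≤ 2 * b) (hQB : 0 < QB)
    (δ1 δ2 δδ1 δδ2 : ℝ)
    (hδ1 : δ1 = ((1 + γ - s) / 2 + b) / (((1 + γ - s) / 2 + b) + ((γ - s) / 2 + b)))
    (hδ2 : δ2 = ((γ - s) / 2 + b) / (((1 + γ - s) / 2 + b) + ((γ - s) / 2 + b)))
    (hδδ1 : δδ1 = 1 / 2) (hδδ2 : δδ2 = 1 / 2)
    (Iset : ℝ → Set (ℕ × ℕ))
    (hIset : ∀ L, Iset L = {α : ℕ × ℕ |
      Real.exp (δ1 * α.1 + δ2 * α.2) + Real.exp (δδ1 * α.1 + δδ2 * α.2) ≤ Real.exp L})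
    (bias : ℝ → ℝ)
    (hbias : ∀ L, bias L = QB *
      ∑' α : ((Iset L)ᶜ : Set (ℕ × ℕ)), τ ^ (-(b * (((α : ℕ × ℕ).1 : ℝ) + ((α : ℕ × ℕ).2 : ℝ)))))
    (Lfun : ℝ → ℝ)
    (hLfun : ∀ TOL : ℝ, 0 < TOL → bias (Lfun TOL) ≤ TOL ∧
      ∀ L' : ℝ, bias L' ≤ TOL → Lfun TOL ≤ L')
    (W : ℝ → ℝ)
    (hW : ∀ TOL : ℝ, 0 < TOL → W TOL = TOL ^ (-2 : ℝ) *
      (∑' α : Iset (Lfun TOL),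
        (τ ^ ((((α : ℕ × ℕ).1 : ℝ) * (1 + γ - s) / 2 + ((α : ℕ × ℕ).2 : ℝ) * (γ - s) / 2)) +
         τ ^ ((((α : ℕ × ℕ).1 : ℝ) * (γ - s) / 2 + ((α : ℕ × ℕ).2 : ℝ) * (γ - s) / 2)))) ^ 2) :
    (1 + γ < s → ∃ C > 0, ∀ᶠ TOL in 𝓝[>] (0 : ℝ),
      W TOL ≤ C * TOL ^ (-2 : ℝ)) ∧
    (s = 1 + γ → ∃ C > 0, ∀ᶠ TOL in 𝓝[>] (0 : ℝ),
      W TOL ≤ C * TOL ^ (-2 : ℝ) * (Real.log TOL⁻¹) ^ 2) ∧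
    (s < 1 + γ → ∃ C > 0, ∀ᶠ TOL in 𝓝[>] (0 : ℝ),
      W TOL ≤ C * TOL ^ (-(2 + (1 + γ - s) / b))) := by
  subst hδδ1 hδδ2
  obtain ⟨hδ2pos, hδ21, hδ1half, hwδ⟩ :=
    isotropic_delta_bounds (by linarith) hb (by linarith) hδ1 hδ2
  have hδ1pos : 0 < δ1 := by linarith
  have hmem : ∀ L, ∀ α ∈ Iset L, δ1 * α.1 + δ2 * α.2 ≤ L := fun L α hα => by
    rw [hIset] at hα
    exact le_of_exp_add_exp_le hα
  obtain ⟨K, hK, hlevel⟩ := exists_rpow_level_le hτ hb hδ21 hδ1half hQB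
    (fun L α hα => by rw [hIset] at hα; exact not_le.mp hα) hbias fun TOL hT => (hLfun TOL hT).2
  have hW' : ∀ TOL > 0, W TOL ≤ 4 * TOL ^ (-2 : ℝ) * (∑' α : Iset (Lfun TOL),
      τ ^ ((1 + γ - s) / 2 * (α : ℕ × ℕ).1 + (γ - s) / 2 * (α : ℕ × ℕ).2)) ^ 2 := by
    intro TOL hT
    have : Finite (Iset (Lfun TOL)) :=
      ((finite_setOf_dot_le hδ1pos hδ2pos _).subset (hmem _)).to_subtype
    rw [hW TOL hT]
    linarith [mul_le_mul_of_nonneg_left (sq_tsum_work_le hτ.le γ s (Iset (Lfun TOL)))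
      (rpow_nonneg hT.le (-2 : ℝ))]
  refine ⟨fun h => eventually_work_le_of_neg hτ (by linarith) (by linarith) hW',
    fun h => eventually_work_le_log hτ (by linarith) (by linarith) hb hδ1pos hδ2pos.le hK hmem
      hlevel hW',
    fun h => ?_⟩
  simpa only [show 2 * ((1 + γ - s) / 2) / b = (1 + γ - s) / b by ring] using
    eventually_work_le_rpow hτ (by linarith) hwδ hb hδ1pos hK hmem hlevel hW'

/-- Isotropic complexity of the multi-index DLMC work bound: with rates
`γ₁=γ₂=γ`, `w₁=w₂=s₁=s₂=s`, `b₁=b₂=b`, `2b ≥ s`, the work bound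
`W(TOL) = TOL⁻² (∑_{α∈I(L(TOL))} τ^{α₁(1+γ-s)/2+α₂(γ-s)/2} + τ^{(α₁+α₂)(γ-s)/2})²`,
with `L(TOL)` minimal such that the geometric bias bound is below `TOL`,
is `O(TOL⁻²)` if `s > 1+γ`, `O(TOL⁻²(log TOL⁻¹)²)` if `s = 1+γ`, and
`O(TOL^{-2-(1+γ-s)/b})` if `s < 1+γ`, as `TOL → 0⁺`. -/
theorem stmt12 (τ γ s b QB : ℝ)
    (hτ : 1 < τ) (hγ : 0 < γ) (hs : 0 < s) (hb : 0 < b)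
    (hbs : s ≤ 2 * b) (hQB : 0 < QB)
    (δ1 δ2 δδ1 δδ2 : ℝ)
    (hδ1 : δ1 = ((1 + γ - s) / 2 + b) / (((1 + γ - s) / 2 + b) + ((γ - s) / 2 + b)))
    (hδ2 : δ2 = ((γ - s) / 2 + b) / (((1 + γ - s) / 2 + b) + ((γ - s) / 2 + b)))
    (hδδ1 : δδ1 = 1 / 2) (hδδ2 : δδ2 = 1 / 2)
    (Iset : ℝ → Set (ℕ × ℕ))
    (hIset : ∀ L, Iset L = {α : ℕ × ℕ |
      Real.exp (δ1 * α.1 + δ2 * α.2) + Real.exp (δδ1 * α.1 + δδ2 * α.2) ≤ Real.exp L})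
    (bias : ℝ → ℝ)
    (hbias : ∀ L, bias L = QB *
      ∑' α : ((Iset L)ᶜ : Set (ℕ × ℕ)), τ ^ (-(b * (((α : ℕ × ℕ).1 : ℝ) + ((α : ℕ × ℕ).2 : ℝ)))))
    (Lfun : ℝ → ℝ)
    (hLfun : ∀ TOL : ℝ, 0 < TOL → bias (Lfun TOL) ≤ TOL ∧
      ∀ L' : ℝ, bias L' ≤ TOL → Lfun TOL ≤ L')
    (W : ℝ → ℝ)
    (hW : ∀ TOL : ℝ, 0 < TOL → W TOL = TOL ^ (-2 : ℝ) *
      (∑' α : Iset (Lfun TOL),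
        (τ ^ ((((α : ℕ × ℕ).1 : ℝ) * (1 + γ - s) / 2 + ((α : ℕ × ℕ).2 : ℝ) * (γ - s) / 2)) +
         τ ^ ((((α : ℕ × ℕ).1 : ℝ) * (γ - s) / 2 + ((α : ℕ × ℕ).2 : ℝ) * (γ - s) / 2)))) ^ 2) :
    (1 + γ < s → ∃ C > 0, ∀ᶠ TOL in 𝓝[>] (0 : ℝ),
      W TOL ≤ C * TOL ^ (-2 : ℝ)) ∧
    (s = 1 + γ → ∃ C > 0, ∀ᶠ TOL in 𝓝[>] (0 : ℝ),
      W TOL ≤ C * TOL ^ (-2 : ℝ) * (Real.log TOL⁻¹) ^ 2) ∧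
    (s < 1 + γ → ∃ C > 0, ∀ᶠ TOL in 𝓝[>] (0 : ℝ),
      W TOL ≤ C * TOL ^ (-(2 + (1 + γ - s) / b))) :=
  stmt12_general τ γ s b QB hτ hγ hb hbs hQB δ1 δ2 δδ1 δδ2 hδ1 hδ2 hδδ1 hδδ2 Iset hIset bias hbias
    Lfun hLfun W hW
end
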